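/- (Corollary 3, safety of neutral functional differential equations) Let E be a real Banach space, τ > 0, and 𝓕 : C([-τ,0], E) × C([-τ,0], E) → E. Let x : ℝ → E be continuously differentiable and satisfy the neutral functional differential equation ẋ(t) = 𝓕(x_t, ẋ_t) for all t ≥ 0, where x_t(θ) = x(t+θ) and ẋ_t(θ) = x'(t+θ). Let 𝓗 : C([-τ,0], E) → ℝ be Fréchet differentiable and let α : ℝ → ℝ be continuous, strictly increasing with α(0) = 0. Suppose that for all t ≥ 0, D𝓗(x_t)(ẋ_t) ≥ -α(𝓗(x_t)). If 𝓗(x_0) ≥ 0, then 𝓗(x_t) ≥ 0 for all t ≥ 0. -/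

import Mathlib

/-!
The curve `t ↦ x_t` is differentiable in `C([-τ,0], E)` with derivative `t ↦ ẋ_t`: pointwise in
`θ` this is the differentiability of `x`, and it is uniform in `θ` by the mean value inequality,
because `t ↦ ẋ_t` is continuous. By the chain rule `h t = 𝓗 (x_t)` is then differentiable with
`h' ≥ -α ∘ h`, so `h' > 0` wherever `h < 0`. If `h` became negative at some time, it would be
strictly increasing on the interval after the last time it was nonnegative, which is absurd.
-/

/-- History segment `x_t ∈ C([-τ,0], E)` of a continuous curve `x : ℝ → E`,
defined by `x_t θ = x (t + θ)`. -/
noncomputable def histSegment {E : Type*} [NormedAddCommGroup E]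
    (τ : ℝ) (x : ℝ → E) (hx : Continuous x) (t : ℝ) :
    C(Set.Icc (-τ) (0 : ℝ), E) :=
  ⟨fun θ => x (t + θ), hx.comp (continuous_const.add continuous_subtype_val)⟩

open Set Metric

theorem ContinuousMap.hasDerivAt_of_forall_hasDerivAt {K E : Type*} [TopologicalSpace K]
    [CompactSpace K] [NormedAddCommGroup E] [NormedSpace ℝ E] {γ γ' : ℝ → C(K, E)} {t : ℝ}
    (hγ : ∀ s k, HasDerivAt (fun r => γ r k) (γ' s k) s) (hγ' : ContinuousAt γ' t) :
    HasDerivAt γ (γ' t) t := by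
  rw [hasDerivAt_iff_isLittleO, Asymptotics.isLittleO_iff]
  intro ε hε
  obtain ⟨δ, hδ, hclose⟩ := Metric.continuousAt_iff.mp hγ' ε hε
  filter_upwards [ball_mem_nhds t hδ] with s hs
  refine (ContinuousMap.norm_le _ (by positivity)).mpr fun k => ?_
  have hderiv : ∀ r ∈ ball t δ, HasDerivWithinAt (fun r => γ r k - r • γ' t k)
      (γ' r k - γ' t k) (ball t δ) r := fun r _ =>
    ((hγ r k).sub ((hasDerivAt_id r).smul_const (γ' t k) |>.congr_deriv (one_smul ℝ _))
      ).hasDerivWithinAt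
  have hbound : ∀ r ∈ ball t δ, ‖γ' r k - γ' t k‖ ≤ ε := fun r hr =>
    (ContinuousMap.norm_coe_le_norm (γ' r - γ' t) k).trans
      (dist_eq_norm (γ' r) (γ' t) ▸ (hclose hr).le)
  have hsplit : (γ s - γ t - (s - t) • γ' t) k = (γ s k - s • γ' t k) - (γ t k - t • γ' t k) := by
    simp only [ContinuousMap.sub_apply, ContinuousMap.smul_apply, sub_smul]
    abel
  rw [hsplit]
  exact (convex_ball t δ).norm_image_sub_le_of_norm_hasDerivWithin_le hderiv hbound
    (mem_ball_self hδ) hs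

theorem continuous_histSegment {E : Type*} [NormedAddCommGroup E] (τ : ℝ) {x : ℝ → E}
    (hx : Continuous x) : Continuous (histSegment τ x hx) :=
  (ContinuousMap.curry ⟨fun p : ℝ × Icc (-τ) (0 : ℝ) => x (p.1 + p.2),
    hx.comp (continuous_fst.add (continuous_subtype_val.comp continuous_snd))⟩).continuous

theorem hasDerivAt_histSegment {E : Type*} [NormedAddCommGroup E] [NormedSpace ℝ E] {τ : ℝ}
    {x x' : ℝ → E} (hx : Continuous x) (hx' : Continuous x')
    (hd : ∀ t, HasDerivAt x (x' t) t) (t : ℝ) :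
    HasDerivAt (histSegment τ x hx) (histSegment τ x' hx' t) t :=
  ContinuousMap.hasDerivAt_of_forall_hasDerivAt (K := Icc (-τ) (0 : ℝ))
    (fun s θ => (hd (s + θ)).comp_add_const s θ)
    (continuous_histSegment τ hx').continuousAt

theorem nonneg_of_hasDerivAt_pos_of_neg {h h' : ℝ → ℝ} {a b : ℝ} (hab : a ≤ b)
    (hcont : ContinuousOn h (Icc a b)) (hder : ∀ s ∈ Ioo a b, HasDerivAt h (h' s) s)
    (hpos : ∀ s ∈ Ioo a b, h s < 0 → 0 < h' s) (ha : 0 ≤ h a) : 0 ≤ h b := by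
  by_contra! hb
  obtain ⟨c, ⟨hc, hhc⟩, hcmax⟩ : ∃ c, IsGreatest (Icc a b ∩ h ⁻¹' Ici 0) c :=
    (isCompact_Icc.of_isClosed_subset (hcont.preimage_isClosed_of_isClosed isClosed_Icc
      isClosed_Ici) inter_subset_left).exists_isGreatest ⟨a, left_mem_Icc.mpr hab, ha⟩
  have hcb : c < b := lt_of_le_of_ne hc.2 fun hcb => (hcb ▸ hb).not_ge hhc
  have hneg : ∀ s ∈ Ioc c b, h s < 0 := fun s hs => by
    by_contra! hs0
    exact hs.1.not_ge (hcmax ⟨⟨hc.1.trans hs.1.le, hs.2⟩, hs0⟩)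
  have hmono : StrictMonoOn h (Icc c b) := by
    refine strictMonoOn_of_hasDerivWithinAt_pos (f' := h') (convex_Icc c b)
      (hcont.mono (Icc_subset_Icc_left hc.1)) (fun s hs => ?_) fun s hs => ?_
    all_goals rw [interior_Icc] at hs
    · exact (hder s ⟨hc.1.trans_lt hs.1, hs.2⟩).hasDerivWithinAt
    · exact hpos s ⟨hc.1.trans_lt hs.1, hs.2⟩ (hneg s (Ioo_subset_Ioc_self hs))
  exact (hmono (left_mem_Icc.mpr hc.2) (right_mem_Icc.mpr hc.2) hcb).not_ge (hb.le.trans hhc)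

theorem statement9_general (E : Type*) [NormedAddCommGroup E] [NormedSpace ℝ E]
    (τ : ℝ)
    (x x' : ℝ → E) (hx : Continuous x) (hx' : Continuous x')
    (hd : ∀ t : ℝ, HasDerivAt x (x' t) t)
    (H : C(Set.Icc (-τ) (0 : ℝ), E) → ℝ)
    (DH : C(Set.Icc (-τ) (0 : ℝ), E) → (C(Set.Icc (-τ) (0 : ℝ), E) →L[ℝ] ℝ))
    (hH : ∀ φ : C(Set.Icc (-τ) (0 : ℝ), E), HasFDerivAt H (DH φ) φ)
    (α : ℝ → ℝ) (hα_mono : StrictMono α) (hα0 : α 0 = 0)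
    (hsafe : ∀ t ≥ (0 : ℝ),
      DH (histSegment τ x hx t) (histSegment τ x' hx' t) ≥ -α (H (histSegment τ x hx t)))
    (h0 : H (histSegment τ x hx 0) ≥ 0) :
    ∀ t ≥ (0 : ℝ), H (histSegment τ x hx t) ≥ 0 := by
  intro t ht
  have hder : ∀ s, HasDerivAt (fun r => H (histSegment τ x hx r))
      (DH (histSegment τ x hx s) (histSegment τ x' hx' s)) s := fun s =>
    (hH _).comp_hasDerivAt s (hasDerivAt_histSegment hx hx' hd s)
  refine nonneg_of_hasDerivAt_pos_of_neg ht (fun s _ => (hder s).continuousAt.continuousWithinAt)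
    (fun s _ => hder s) (fun s hs hneg => ?_) h0
  calc 0 = -α 0 := by rw [hα0, neg_zero]
    _ < -α (H (histSegment τ x hx s)) := neg_lt_neg (hα_mono hneg)
    _ ≤ _ := hsafe s hs.1.le

/-- Corollary 3: safety of neutral functional differential equations. If `x` solves
`ẋ(t) = 𝓕(x_t, ẋ_t)` for `t ≥ 0`, `𝓗` is Fréchet differentiable, `α` is continuous,
strictly increasing with `α 0 = 0`, and `D𝓗(x_t)(ẋ_t) ≥ -α(𝓗(x_t))` for all
`t ≥ 0`, then `𝓗(x_0) ≥ 0` implies `𝓗(x_t) ≥ 0` for all `t ≥ 0`. -/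
theorem statement9 (E : Type*) [NormedAddCommGroup E] [NormedSpace ℝ E] [CompleteSpace E]
    (τ : ℝ) (hτ : 0 < τ)
    (F : C(Set.Icc (-τ) (0 : ℝ), E) → C(Set.Icc (-τ) (0 : ℝ), E) → E)
    (x x' : ℝ → E) (hx : Continuous x) (hx' : Continuous x')
    (hd : ∀ t : ℝ, HasDerivAt x (x' t) t)
    (hode : ∀ t ≥ (0 : ℝ), x' t = F (histSegment τ x hx t) (histSegment τ x' hx' t))
    (H : C(Set.Icc (-τ) (0 : ℝ), E) → ℝ)
    (DH : C(Set.Icc (-τ) (0 : ℝ), E) → (C(Set.Icc (-τ) (0 : ℝ), E) →L[ℝ] ℝ))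
    (hH : ∀ φ : C(Set.Icc (-τ) (0 : ℝ), E), HasFDerivAt H (DH φ) φ)
    (α : ℝ → ℝ) (hα_cont : Continuous α) (hα_mono : StrictMono α) (hα0 : α 0 = 0)
    (hsafe : ∀ t ≥ (0 : ℝ),
      DH (histSegment τ x hx t) (histSegment τ x' hx' t) ≥ -α (H (histSegment τ x hx t)))
    (h0 : H (histSegment τ x hx 0) ≥ 0) :
    ∀ t ≥ (0 : ℝ), H (histSegment τ x hx t) ≥ 0 :=
  statement9_general E τ x x' hx hx' hd H DH hH α hα_mono hα0 hsafe h0
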